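/- Let Γ be a finite simple bipartite graph with parts V1 and V2, and let d1, d2 be positive integers with |E(Γ)| > (d1-1)|V1| + (d2-1)|V2|. Then Γ contains a nonempty bipartite subgraph with parts V1' ⊆ V1 and V2' ⊆ V2 such that every vertex of V1' has degree (within the subgraph) at least d1 and every vertex of V2' has degree at least d2. -/
import Mathlib


open Finset

private lemma deg_card_eq {α β : Type*} [DecidableEq α] [DecidableEq β]
    (V1 : Finset α) (V2 : Finset β) (E : Finset (α × β)) (hE : E ⊆ V1 ×ˢ V2) (a : α) :
    (V2.filter fun b => (a, b) ∈ E).card = (E.filter fun e => e.1 = a).card := by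
  apply Finset.card_bij' (fun b _ => (a, b)) (fun e _ => e.2)
  · intro b hb
    simp only [mem_filter] at hb ⊢
    simp [hb.2]
  · intro e he
    simp only [mem_filter] at he ⊢
    obtain ⟨he1, he2⟩ := he
    have := hE he1
    simp only [mem_product] at this
    subst he2
    exact ⟨this.2, he1⟩
  · intro b _; rfl
  · intro e he
    simp only [mem_filter] at he
    obtain ⟨x, y⟩ := e
    simp_all

private lemma deg_card_eq' {α β : Type*} [DecidableEq α] [DecidableEq β]
    (V1 : Finset α) (V2 : Finset β) (E : Finset (α × β)) (hE : E ⊆ V1 ×ˢ V2) (b : β) :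
    (V1.filter fun a => (a, b) ∈ E).card = (E.filter fun e => e.2 = b).card := by
  apply Finset.card_bij' (fun a _ => (a, b)) (fun e _ => e.1)
  · intro a ha
    simp only [mem_filter] at ha ⊢
    simp [ha.2]
  · intro e he
    simp only [mem_filter] at he ⊢
    obtain ⟨he1, he2⟩ := he
    have := hE he1
    simp only [mem_product] at this
    subst he2
    exact ⟨this.1, he1⟩
  · intro a _; rfl
  · intro e he
    simp only [mem_filter] at he
    obtain ⟨x, y⟩ := e
    simp_all

private lemma bip_aux {α β : Type*} [DecidableEq α] [DecidableEq β] (d1 d2 : ℕ) :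
    ∀ n (V1 : Finset α) (V2 : Finset β) (E : Finset (α × β)), V1.card + V2.card ≤ n →
    E ⊆ V1 ×ˢ V2 →
    (d1 - 1) * V1.card + (d2 - 1) * V2.card < E.card →
    ∃ V1' ⊆ V1, ∃ V2' ⊆ V2, V1'.Nonempty ∧ V2'.Nonempty ∧
      (∀ a ∈ V1', d1 ≤ (V2'.filter fun b => (a, b) ∈ E).card) ∧
      (∀ b ∈ V2', d2 ≤ (V1'.filter fun a => (a, b) ∈ E).card) := by
  intro n
  induction n with
  | zero =>
    intro V1 V2 E hn hE h
    have h1 : V1 = ∅ := card_eq_zero.mp (Nat.le_zero.mp (le_trans (Nat.le_add_right _ _) hn))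
    subst h1
    have : E = ∅ := subset_empty.mp (by simpa using hE)
    simp [this] at h
  | succ n ih =>
    intro V1 V2 E hn hE h
    by_cases h1 : ∃ a ∈ V1, (V2.filter fun b => (a, b) ∈ E).card < d1
    · obtain ⟨a, haV, ha⟩ := h1
      set E' := E.filter fun e => e.1 ≠ a with hE'def
      have hsub : E' ⊆ (V1.erase a) ×ˢ V2 := by
        intro e he
        simp only [hE'def, mem_filter] at he
        have := hE he.1
        simp only [mem_product] at this ⊢
        exact ⟨mem_erase.mpr ⟨he.2, this.1⟩, this.2⟩
      have hsplit : (E.filter fun e => e.1 = a).card + E'.card = E.card := by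
        simpa using Finset.card_filter_add_card_filter_not
          (s := E) (p := fun e => e.1 = a)
      have hdeg : (E.filter fun e => e.1 = a).card ≤ d1 - 1 := by
        rw [← deg_card_eq V1 V2 E hE a]
        omega
      have hV1pos : 1 ≤ V1.card := card_pos.mpr ⟨a, haV⟩
      have hcard : (d1 - 1) * (V1.erase a).card + (d2 - 1) * V2.card < E'.card := by
        rw [card_erase_of_mem haV]
        have : (d1 - 1) * V1.card = (d1 - 1) * (V1.card - 1) + (d1 - 1) := by
          have : V1.card - 1 + 1 = V1.card := by omega
          calc (d1 - 1) * V1.card = (d1 - 1) * (V1.card - 1 + 1) := by rw [this]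
            _ = (d1 - 1) * (V1.card - 1) + (d1 - 1) := by ring
        omega
      have hn' : (V1.erase a).card + V2.card ≤ n := by
        rw [card_erase_of_mem haV]; omega
      obtain ⟨V1', hV1', V2', hV2', hne1, hne2, hdeg1, hdeg2⟩ := ih _ _ _ hn' hsub hcard
      refine ⟨V1', hV1'.trans (erase_subset _ _), V2', hV2', hne1, hne2, ?_, ?_⟩
      · intro x hx
        refine le_trans (hdeg1 x hx) (card_le_card ?_)
        intro b hb
        simp only [mem_filter, hE'def] at hb ⊢
        exact ⟨hb.1, hb.2.1⟩
      · intro x hx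
        refine le_trans (hdeg2 x hx) (card_le_card ?_)
        intro b hb
        simp only [mem_filter, hE'def] at hb ⊢
        exact ⟨hb.1, hb.2.1⟩
    · by_cases h2 : ∃ b ∈ V2, (V1.filter fun a => (a, b) ∈ E).card < d2
      · obtain ⟨b, hbV, hb⟩ := h2
        set E' := E.filter fun e => e.2 ≠ b with hE'def
        have hsub : E' ⊆ V1 ×ˢ (V2.erase b) := by
          intro e he
          simp only [hE'def, mem_filter] at he
          have := hE he.1
          simp only [mem_product] at this ⊢
          exact ⟨this.1, mem_erase.mpr ⟨he.2, this.2⟩⟩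
        have hsplit : (E.filter fun e => e.2 = b).card + E'.card = E.card := by
          simpa using Finset.card_filter_add_card_filter_not
            (s := E) (p := fun e => e.2 = b)
        have hdeg : (E.filter fun e => e.2 = b).card ≤ d2 - 1 := by
          rw [← deg_card_eq' V1 V2 E hE b]
          omega
        have hV2pos : 1 ≤ V2.card := card_pos.mpr ⟨b, hbV⟩
        have hcard : (d1 - 1) * V1.card + (d2 - 1) * (V2.erase b).card < E'.card := by
          rw [card_erase_of_mem hbV]
          have : (d2 - 1) * V2.card = (d2 - 1) * (V2.card - 1) + (d2 - 1) := by
            have : V2.card - 1 + 1 = V2.card := by omega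
            calc (d2 - 1) * V2.card = (d2 - 1) * (V2.card - 1 + 1) := by rw [this]
              _ = (d2 - 1) * (V2.card - 1) + (d2 - 1) := by ring
          omega
        have hn' : V1.card + (V2.erase b).card ≤ n := by
          rw [card_erase_of_mem hbV]; omega
        obtain ⟨V1', hV1', V2', hV2', hne1, hne2, hdeg1, hdeg2⟩ := ih _ _ _ hn' hsub hcard
        refine ⟨V1', hV1', V2', hV2'.trans (erase_subset _ _), hne1, hne2, ?_, ?_⟩
        · intro x hx
          refine le_trans (hdeg1 x hx) (card_le_card ?_)
          intro c hc
          simp only [mem_filter, hE'def] at hc ⊢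
          exact ⟨hc.1, hc.2.1⟩
        · intro x hx
          refine le_trans (hdeg2 x hx) (card_le_card ?_)
          intro c hc
          simp only [mem_filter, hE'def] at hc ⊢
          exact ⟨hc.1, hc.2.1⟩
      · push_neg at h1 h2
        have hEne : E.Nonempty := card_pos.mp (by omega)
        obtain ⟨e, he⟩ := hEne
        have hm := hE he
        simp only [mem_product] at hm
        exact ⟨V1, Subset.rfl, V2, Subset.rfl, ⟨e.1, hm.1⟩, ⟨e.2, hm.2⟩,
          fun a ha => h1 a ha, fun b hb => h2 b hb⟩

/-- Bipartite version of Erdős' lemma: if a bipartite graph with parts `V1`, `V2`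
and edge set `E ⊆ V1 × V2` has `|E| > (d1-1)|V1| + (d2-1)|V2|`, then there are
nonempty `V1' ⊆ V1`, `V2' ⊆ V2` such that in the induced bipartite subgraph every
vertex of `V1'` has degree at least `d1` and every vertex of `V2'` has degree at
least `d2`. -/
theorem exists_bipartite_min_degree_subgraph {α β : Type*} [DecidableEq α] [DecidableEq β]
    (V1 : Finset α) (V2 : Finset β) (E : Finset (α × β)) (hE : E ⊆ V1 ×ˢ V2)
    (d1 d2 : ℕ) (hd1 : 0 < d1) (hd2 : 0 < d2)
    (h : (d1 - 1) * V1.card + (d2 - 1) * V2.card < E.card) :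
    ∃ V1' ⊆ V1, ∃ V2' ⊆ V2, V1'.Nonempty ∧ V2'.Nonempty ∧
      (∀ a ∈ V1', d1 ≤ (V2'.filter fun b => (a, b) ∈ E).card) ∧
      (∀ b ∈ V2', d2 ≤ (V1'.filter fun a => (a, b) ∈ E).card) := by
  exact bip_aux d1 d2 (V1.card + V2.card) V1 V2 E le_rfl hE h
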